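/- arXiv:2509.08547 — 6 statements merged into one kernel-verified Lean document; each statement's English description precedes it below -/
import Mathlib

section
/- Let Q be a finite measure on ℝ^d and G : ℝ^d → ℝ be measurable with the property that for every x ∈ ℝ^d, ∫ (F(x) + G(y) + ⟨x, y⟩)₊ dQ(y) = ε for a fixed ε > 0 and some function F : ℝ^d → ℝ. Then F is concave. -/
/-!
Put `w = a • x + b • x'` and `c = a F(x) + b F(x')`. Since `y ↦ G y + ⟪w, y⟫` is the convex
combination of the corresponding affine functions of `x` and `x'`, convexity of `t ↦ t₊` gives
`(c + G y + ⟪w, y⟫)₊ ≤ a (F x + G y + ⟪x, y⟫)₊ + b (F x' + G y + ⟪x', y⟫)₊`, whose right-hand side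
integrates to `ε`. If `F w < c`, the integrand at `w` is dominated by the same function and also
integrates to `ε`, so the two agree almost everywhere. Where `(F w + G y + ⟪w, y⟫)₊ > 0` they
cannot agree, hence that integrand vanishes almost everywhere, contradicting `ε ≠ 0`.
-/

open MeasureTheory Set

lemma max_zero_convex_comb_le {a b : ℝ} (ha : 0 ≤ a) (hb : 0 ≤ b) (hab : a + b = 1) (u v : ℝ) :
    max (a * u + b * v) 0 ≤ a * max u 0 + b * max v 0 :=
  ((convexOn_id convex_univ).sup (convexOn_const 0 convex_univ)).2 trivial trivial ha hb hab

lemma max_add_zero_eq_zero_of_le {s t u : ℝ} (hst : s < t) (h : max (t + u) 0 ≤ max (s + u) 0) :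
    max (s + u) 0 = 0 := by
  grind

lemma integral_max_add_eq_zero_of_dominated {α : Type*} [MeasurableSpace α] {μ : Measure α}
    {k g : α → ℝ} {s t : ℝ} (hst : s < t) (hf : Integrable (fun y => max (s + k y) 0) μ)
    (hg : Integrable g μ) (hdom : ∀ y, max (t + k y) 0 ≤ g y)
    (hint : ∫ y, g y ∂μ ≤ ∫ y, max (s + k y) 0 ∂μ) :
    ∫ y, max (s + k y) 0 ∂μ = 0 := by
  have hfg : ∀ y, max (s + k y) 0 ≤ g y := fun y =>
    (max_le_max_right 0 (by linarith)).trans (hdom y)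
  have hae : (fun y => max (s + k y) 0) =ᵐ[μ] g :=
    (integral_eq_iff_of_ae_le hf hg (ae_of_all _ hfg)).1
      (le_antisymm (integral_mono hf hg hfg) hint)
  have hzero : (fun y => max (s + k y) 0) =ᵐ[μ] 0 := by
    filter_upwards [hae] with y hy
    exact max_add_zero_eq_zero_of_le hst (hy ▸ hdom y)
  simp [integral_congr_ae hzero]

theorem concaveOn_of_integral_max_add_inner_eq {E : Type*} [NormedAddCommGroup E]
    [InnerProductSpace ℝ E] [MeasurableSpace E] {Q : Measure E} {F G : E → ℝ} {ε : ℝ}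
    (hε : ε ≠ 0) (hEq : ∀ x, ∫ y, max (F x + G y + inner ℝ x y) 0 ∂Q = ε) :
    ConcaveOn ℝ univ F := by
  simp_rw [add_assoc] at hEq
  -- a non-integrable integrand would have Bochner integral `0 ≠ ε`
  have hInt : ∀ x, Integrable (fun y => max (F x + (G y + inner ℝ x y)) 0) Q := fun x =>
    Integrable.of_integral_ne_zero (by rw [hEq x]; exact hε)
  refine ⟨convex_univ, fun x _ x' _ a b ha hb hab => ?_⟩
  by_contra! hlt
  set w := a • x + b • x'
  have hdom : ∀ y, max (a • F x + b • F x' + (G y + inner ℝ w y)) 0 ≤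
      a * max (F x + (G y + inner ℝ x y)) 0 + b * max (F x' + (G y + inner ℝ x' y)) 0 := by
    intro y
    convert max_zero_convex_comb_le ha hb hab _ _ using 2
    simp only [w, smul_eq_mul, inner_add_left, inner_smul_left, RCLike.conj_to_real]
    linear_combination (G y) * hab.symm
  have hgInt : Integrable (fun y => a * max (F x + (G y + inner ℝ x y)) 0 +
      b * max (F x' + (G y + inner ℝ x' y)) 0) Q :=
    ((hInt x).const_mul a).add ((hInt x').const_mul b)
  have hgε : ∫ y, a * max (F x + (G y + inner ℝ x y)) 0 +
      b * max (F x' + (G y + inner ℝ x' y)) 0 ∂Q = ε := by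
    rw [integral_add ((hInt x).const_mul a) ((hInt x').const_mul b), integral_const_mul,
      integral_const_mul, hEq, hEq]
    linear_combination ε * hab
  apply hε
  rw [← hEq w]
  exact integral_max_add_eq_zero_of_dominated hlt (hInt w) hgInt hdom (by rw [hgε, hEq])

theorem concave_of_integral_pos_part_constraint_general (d : ℕ)
    (Q : Measure (EuclideanSpace ℝ (Fin d)))
    (F G : EuclideanSpace ℝ (Fin d) → ℝ) (ε : ℝ) (hε : 0 < ε)
    (hEq : ∀ x, ∫ y, max (F x + G y + (inner ℝ x y : ℝ)) 0 ∂Q = ε) :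
    ConcaveOn ℝ Set.univ F :=
  concaveOn_of_integral_max_add_inner_eq hε.ne' hEq

theorem concave_of_integral_pos_part_constraint (d : ℕ)
    (Q : Measure (EuclideanSpace ℝ (Fin d))) [IsFiniteMeasure Q]
    (F G : EuclideanSpace ℝ (Fin d) → ℝ) (ε : ℝ) (hε : 0 < ε)
    (hInt : ∀ x, Integrable (fun y => max (F x + G y + inner ℝ x y) 0) Q)
    (hEq : ∀ x, ∫ y, max (F x + G y + (inner ℝ x y : ℝ)) 0 ∂Q = ε) :
    ConcaveOn ℝ Set.univ F :=
  concave_of_integral_pos_part_constraint_general d Q F G ε hε hEq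
end

section
/- Let P, Q be probability measures on ℝ^d and let E ⊆ ℝ^d × ℝ^d be measurable. Suppose f ∈ L²(P) and g ∈ L²(Q) satisfy: for all h ∈ L²(P), ∫∫_E (f(x) + g(y)) h(x) dQ(y) dP(x) = 0, and for all k ∈ L²(Q), ∫∫_E (f(x) + g(y)) k(y) dP(x) dQ(y) = 0. Then f(x) + g(y) = 0 for (P ⊗ Q)-almost every (x,y) ∈ E. -/
/-!
Take `h = f` in the first orthogonality relation and `k = g` in the second. By Fubini both
become integrals over `E` for `P ⊗ Q`, of `(f x + g y) f x` and of `(f x + g y) g y`; adding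
them gives `∫_E (f x + g y)² d(P ⊗ Q) = 0`, so the nonnegative integrand vanishes a.e. on `E`.
-/

open MeasureTheory

section

variable {α β : Type*} [MeasurableSpace α] [MeasurableSpace β]
  {μ : Measure α} {ν : Measure β} [SFinite μ] [SFinite ν] {E : Set (α × β)} {F : α × β → ℝ}

lemma integral_integral_indicator_eq_setIntegral (hE : MeasurableSet E)
    (hF : Integrable F (μ.prod ν)) :
    ∫ x, ∫ y, E.indicator (fun _ => F (x, y)) (x, y) ∂ν ∂μ = ∫ p in E, F p ∂μ.prod ν := by
  rw [← integral_indicator hE]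
  exact integral_integral (f := fun x y => E.indicator F (x, y)) (hF.indicator hE)

lemma integral_integral_indicator_swap_eq_setIntegral (hE : MeasurableSet E)
    (hF : Integrable F (μ.prod ν)) :
    ∫ y, ∫ x, E.indicator (fun _ => F (x, y)) (x, y) ∂μ ∂ν = ∫ p in E, F p ∂μ.prod ν := by
  rw [← integral_indicator hE, integral_prod_symm _ (hF.indicator hE)]
  rfl

end

lemma ae_eq_zero_on_of_setIntegral_sq_eq_zero {α : Type*} [MeasurableSpace α] {μ : Measure α}
    {s : Set α} (hs : MeasurableSet s) {S : α → ℝ} (hS : MemLp S 2 μ)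
    (h : ∫ p in s, S p ^ 2 ∂μ = 0) : ∀ᵐ p ∂μ, p ∈ s → S p = 0 := by
  have hsq : (fun p => S p ^ 2) =ᵐ[μ.restrict s] 0 :=
    (setIntegral_eq_zero_iff_of_nonneg_ae (Filter.Eventually.of_forall fun p => sq_nonneg (S p))
      hS.integrable_sq.integrableOn).mp h
  filter_upwards [(ae_restrict_iff' hs).mp hsq] with p hp hps
  exact pow_eq_zero_iff two_ne_zero |>.mp (hp hps)

theorem sum_zero_ae_on_E_of_orthogonality_general (d : ℕ)
    (P Q : Measure (EuclideanSpace ℝ (Fin d)))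
    [IsProbabilityMeasure P] [IsProbabilityMeasure Q]
    (E : Set (EuclideanSpace ℝ (Fin d) × EuclideanSpace ℝ (Fin d)))
    (hE : MeasurableSet E)
    (f g : EuclideanSpace ℝ (Fin d) → ℝ)
    (hf : MemLp f 2 P) (hg : MemLp g 2 Q)
    (h1 : ∀ h : EuclideanSpace ℝ (Fin d) → ℝ, MemLp h 2 P →
      ∫ x, ∫ y, E.indicator (fun _ => (f x + g y) * h x) (x, y) ∂Q ∂P = 0)
    (h2 : ∀ k : EuclideanSpace ℝ (Fin d) → ℝ, MemLp k 2 Q →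
      ∫ y, ∫ x, E.indicator (fun _ => (f x + g y) * k y) (x, y) ∂P ∂Q = 0) :
    ∀ᵐ p ∂(P.prod Q), p ∈ E → f p.1 + g p.2 = 0 := by
  have hS : MemLp (fun p => f p.1 + g p.2) 2 (P.prod Q) := (hf.comp_fst Q).add (hg.comp_snd P)
  have hSf : Integrable (fun p => (f p.1 + g p.2) * f p.1) (P.prod Q) :=
    hS.integrable_mul (hf.comp_fst Q)
  have hSg : Integrable (fun p => (f p.1 + g p.2) * g p.2) (P.prod Q) :=
    hS.integrable_mul (hg.comp_snd P)
  have orth_f : ∫ p in E, (f p.1 + g p.2) * f p.1 ∂P.prod Q = 0 := by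
    rw [← integral_integral_indicator_eq_setIntegral hE hSf]
    exact h1 f hf
  have orth_g : ∫ p in E, (f p.1 + g p.2) * g p.2 ∂P.prod Q = 0 := by
    rw [← integral_integral_indicator_swap_eq_setIntegral hE hSg]
    exact h2 g hg
  refine ae_eq_zero_on_of_setIntegral_sq_eq_zero hE hS ?_
  calc ∫ p in E, (f p.1 + g p.2) ^ 2 ∂P.prod Q
      = ∫ p in E, ((f p.1 + g p.2) * f p.1 + (f p.1 + g p.2) * g p.2) ∂P.prod Q := by
        simp only [sq, mul_add]
    _ = 0 := by
        rw [integral_add hSf.integrableOn hSg.integrableOn, orth_f, orth_g, add_zero]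

theorem sum_zero_ae_on_E_of_orthogonality (d : ℕ)
    (P Q : Measure (EuclideanSpace ℝ (Fin d)))
    [IsProbabilityMeasure P] [IsProbabilityMeasure Q]
    (E : Set (EuclideanSpace ℝ (Fin d) × EuclideanSpace ℝ (Fin d)))
    (hE : MeasurableSet E)
    (f g : EuclideanSpace ℝ (Fin d) → ℝ)
    (hf : MemLp f 2 P) (hg : MemLp g 2 Q)
    (hmf : Measurable f) (hmg : Measurable g)
    (h1 : ∀ h : EuclideanSpace ℝ (Fin d) → ℝ, MemLp h 2 P →
      ∫ x, ∫ y, E.indicator (fun _ => (f x + g y) * h x) (x, y) ∂Q ∂P = 0)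
    (h2 : ∀ k : EuclideanSpace ℝ (Fin d) → ℝ, MemLp k 2 Q →
      ∫ y, ∫ x, E.indicator (fun _ => (f x + g y) * k y) (x, y) ∂P ∂Q = 0) :
    ∀ᵐ p ∂(P.prod Q), p ∈ E → f p.1 + g p.2 = 0 :=
  sum_zero_ae_on_E_of_orthogonality_general d P Q E hE f g hf hg h1 h2
end

section
/- Let P, Q be Borel probability measures on ℝ^d with compact supports. For each x, let S_x ⊆ ℝ^d be a measurable set (jointly measurable in (x,y)) with Q(S_x) ≥ λ > 0 for all x. Then the operator A₁ : L²(Q) → L²(P) defined by (A₁ g)(x) = (∫_{S_x} g dQ) / Q(S_x) is a compact operator. -/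
/-!
Averaging over `S x` is pairing with the indicator of `S x` in `L²(Q)`, whose norm is
`√Q(S x)`. Hence a bounded weakly null sequence `uₙ` has images `T uₙ` that tend to `0`
pointwise and are uniformly bounded by `sup ‖uₙ‖ / √λ`, so `‖T uₙ‖ → 0` by dominated
convergence. Since bounded sequences in the separable Hilbert space `L²(Q)` have weakly
convergent subsequences (sequential Banach–Alaoglu), `T` maps the unit ball to a sequentially
compact set.
-/

open MeasureTheory Filter Topology

section Weak

variable {H : Type*} [NormedAddCommGroup H] [InnerProductSpace ℝ H] [CompleteSpace H]
  [TopologicalSpace.SeparableSpace H]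

theorem exists_subseq_tendsto_inner {g : ℕ → H} {r : ℝ} (hg : ∀ n, ‖g n‖ ≤ r) :
    ∃ a, ‖a‖ ≤ r ∧ ∃ φ : ℕ → ℕ, StrictMono φ ∧
      ∀ h, Tendsto (fun n ↦ inner ℝ (g (φ n)) h) atTop (𝓝 (inner ℝ a h)) := by
  let ℓ : ℕ → WeakDual ℝ H := fun n ↦
    WeakDual.toStrongDual.symm (InnerProductSpace.toDual ℝ H (g n))
  have hℓ : ∀ n, ℓ n ∈ WeakDual.toStrongDual ⁻¹' Metric.closedBall 0 r := fun n ↦ by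
    simpa [ℓ] using hg n
  obtain ⟨L, hL, φ, hφ, hlim⟩ := WeakDual.isSeqCompact_closedBall ℝ H 0 r hℓ
  refine ⟨(InnerProductSpace.toDual ℝ H).symm (WeakDual.toStrongDual L), ?_, φ, hφ, fun h ↦ ?_⟩
  · simpa using hL
  · rw [InnerProductSpace.toDual_symm_apply]
    exact ((WeakBilin.eval_continuous _ h).tendsto L).comp hlim

theorem isCompactOperator_of_tendsto_norm_of_weakly_null {F : Type*} [NormedAddCommGroup F]
    [NormedSpace ℝ F] (T : H →L[ℝ] F)
    (hT : ∀ (u : ℕ → H) (C : ℝ), (∀ n, ‖u n‖ ≤ C) →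
      (∀ h, Tendsto (fun n ↦ inner ℝ (u n) h) atTop (𝓝 0)) →
      Tendsto (fun n ↦ ‖T (u n)‖) atTop (𝓝 0)) :
    IsCompactOperator T := by
  refine (isCompactOperator_iff_image_closedBall_subset_compact (T : H →ₗ[ℝ] F) one_pos).2
    ⟨_, IsSeqCompact.isCompact fun v hv ↦ ?_, subset_rfl⟩
  choose g hg hgv using hv
  have hg1 : ∀ n, ‖g n‖ ≤ 1 := fun n ↦ by simpa using hg n
  obtain ⟨a, ha, φ, hφ, hweak⟩ := exists_subseq_tendsto_inner hg1
  refine ⟨T a, ⟨a, by simpa using ha, rfl⟩, φ, hφ, ?_⟩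
  rw [tendsto_iff_norm_sub_tendsto_zero]
  have hbound : ∀ n, ‖g (φ n) - a‖ ≤ 2 := fun n ↦
    (norm_sub_le _ _).trans (by linarith [hg1 (φ n)])
  refine (hT _ 2 hbound fun h ↦ ?_).congr fun n ↦ by simp [← hgv, map_sub]
  simpa [inner_sub_left] using (hweak h).sub_const (inner ℝ a h)

end Weak

section Averaging

variable {α β : Type*} [MeasurableSpace α] [MeasurableSpace β]

theorem exists_inner_eq_setIntegral (Q : Measure β) [IsFiniteMeasure Q] (s : Set β) :
    ∃ w : Lp ℝ 2 Q, ‖w‖ = √(Q.real s) ∧ ∀ f : Lp ℝ 2 Q, inner ℝ w f = ∫ y in s, f y ∂Q := by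
  have hfin : Q (toMeasurable Q s) ≠ ⊤ := measure_ne_top Q _
  refine ⟨indicatorConstLp 2 (measurableSet_toMeasurable Q s) hfin 1, ?_, fun f ↦ ?_⟩
  · rw [norm_indicatorConstLp two_ne_zero ENNReal.ofNat_ne_top, norm_one, one_mul,
      measureReal_def, measure_toMeasurable, ← measureReal_def, Real.sqrt_eq_rpow]
    norm_num
  · rw [L2.inner_indicatorConstLp_one _ hfin, Measure.restrict_toMeasurable (measure_ne_top Q s)]

theorem abs_setIntegral_div_le {Q : Measure β} [IsFiniteMeasure Q] (s : Set β) (f : Lp ℝ 2 Q) :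
    |(∫ y in s, f y ∂Q) / Q.real s| ≤ ‖f‖ / √(Q.real s) := by
  obtain ⟨w, hw, hwf⟩ := exists_inner_eq_setIntegral Q s
  rcases (measureReal_nonneg (μ := Q) (s := s)).eq_or_lt with hs | hs
  · simp [← hs]
  have hCS : |∫ y in s, f y ∂Q| ≤ √(Q.real s) * ‖f‖ := by
    rw [← hwf, ← hw]
    exact abs_real_inner_le_norm w f
  rw [abs_div, abs_of_pos hs, div_le_div_iff₀ hs (Real.sqrt_pos.2 hs)]
  calc |∫ y in s, f y ∂Q| * √(Q.real s) ≤ √(Q.real s) * ‖f‖ * √(Q.real s) := by gcongr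
    _ = ‖f‖ * Q.real s := by rw [mul_comm _ ‖f‖, mul_assoc, Real.mul_self_sqrt hs.le]

theorem tendsto_norm_of_ae_tendsto_of_ae_bounded {P : Measure α} [IsFiniteMeasure P]
    {F : ℕ → Lp ℝ 2 P} {C : ℝ} (hbound : ∀ n, ∀ᵐ x ∂P, |F n x| ≤ C)
    (hlim : ∀ᵐ x ∂P, Tendsto (fun n ↦ F n x) atTop (𝓝 0)) :
    Tendsto (fun n ↦ ‖F n‖) atTop (𝓝 0) := by
  have hnorm : ∀ n, ‖F n‖ ^ 2 = ∫ x, F n x ^ 2 ∂P := fun n ↦ by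
    rw [← real_inner_self_eq_norm_sq, L2.inner_def]
    simp [sq]
  have hsq : Tendsto (fun n ↦ ‖F n‖ ^ 2) atTop (𝓝 0) := by
    simp_rw [hnorm]
    simpa using tendsto_integral_of_dominated_convergence (f := fun _ ↦ (0 : ℝ)) (fun _ ↦ C ^ 2)
      (fun n ↦ (Lp.aestronglyMeasurable (F n)).pow 2) (integrable_const _)
      (fun n ↦ (hbound n).mono fun x hx ↦ by
        simpa using sq_le_sq' (abs_le.1 hx).1 (abs_le.1 hx).2)
      (hlim.mono fun x hx ↦ by simpa using hx.pow 2)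
  simpa using hsq.sqrt

theorem tendsto_norm_averaging_of_weakly_null {P : Measure α} {Q : Measure β} [IsFiniteMeasure P]
    [IsFiniteMeasure Q] {S : α → Set β} {lam : ℝ} (hlam : 0 < lam) (hS : ∀ x, lam ≤ Q.real (S x))
    {T : Lp ℝ 2 Q → Lp ℝ 2 P}
    (hT : ∀ g, ∀ᵐ x ∂P, T g x = (∫ y in S x, g y ∂Q) / Q.real (S x))
    {u : ℕ → Lp ℝ 2 Q} {C : ℝ} (hu : ∀ n, ‖u n‖ ≤ C)
    (hweak : ∀ h, Tendsto (fun n ↦ inner ℝ (u n) h) atTop (𝓝 0)) :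
    Tendsto (fun n ↦ ‖T (u n)‖) atTop (𝓝 0) := by
  refine tendsto_norm_of_ae_tendsto_of_ae_bounded (C := C / √lam) (fun n ↦ ?_) ?_
  · filter_upwards [hT (u n)] with x hx
    have hC : 0 ≤ C := (norm_nonneg _).trans (hu n)
    calc |T (u n) x| ≤ ‖u n‖ / √(Q.real (S x)) := hx ▸ abs_setIntegral_div_le _ _
      _ ≤ C / √lam := by gcongr; exacts [hu n, hS x]
  · filter_upwards [ae_all_iff.2 fun n ↦ hT (u n)] with x hx
    obtain ⟨w, -, hw⟩ := exists_inner_eq_setIntegral Q (S x)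
    simp_rw [hx, ← hw, ← real_inner_comm w]
    simpa using (hweak w).div_const (Q.real (S x))

end Averaging

theorem averaging_operator_compact_general (d : ℕ)
    (P Q : Measure (EuclideanSpace ℝ (Fin d)))
    [IsProbabilityMeasure P] [IsProbabilityMeasure Q]
    (S : EuclideanSpace ℝ (Fin d) → Set (EuclideanSpace ℝ (Fin d)))
    (lam : ℝ) (hlam : 0 < lam) (hSlow : ∀ x, ENNReal.ofReal lam ≤ Q (S x))
    (T : Lp ℝ 2 Q →L[ℝ] Lp ℝ 2 P)
    (hT : ∀ g : Lp ℝ 2 Q, ∀ᵐ x ∂P,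
      (T g : EuclideanSpace ℝ (Fin d) → ℝ) x = (∫ y in S x, g y ∂Q) / (Q (S x)).toReal) :
    IsCompactOperator T := by
  -- needed to find the instance `SeparableSpace (Lp ℝ 2 Q)`
  have : Fact ((2 : ENNReal) ≠ ⊤) := ⟨ENNReal.ofNat_ne_top⟩
  refine isCompactOperator_of_tendsto_norm_of_weakly_null T fun u C hu hweak ↦ ?_
  have hS x : lam ≤ Q.real (S x) :=
    (ENNReal.ofReal_le_iff_le_toReal (measure_ne_top Q _)).1 (hSlow x)
  exact tendsto_norm_averaging_of_weakly_null hlam hS hT hu hweak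

theorem averaging_operator_compact (d : ℕ)
    (P Q : Measure (EuclideanSpace ℝ (Fin d)))
    [IsProbabilityMeasure P] [IsProbabilityMeasure Q]
    (KP KQ : Set (EuclideanSpace ℝ (Fin d))) (hKP : IsCompact KP) (hKQ : IsCompact KQ)
    (hPsupp : P KPᶜ = 0) (hQsupp : Q KQᶜ = 0)
    (S : EuclideanSpace ℝ (Fin d) → Set (EuclideanSpace ℝ (Fin d)))
    (hSmeas : MeasurableSet {p : EuclideanSpace ℝ (Fin d) × EuclideanSpace ℝ (Fin d) |
      p.2 ∈ S p.1})
    (lam : ℝ) (hlam : 0 < lam) (hSlow : ∀ x, ENNReal.ofReal lam ≤ Q (S x))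
    (T : Lp ℝ 2 Q →L[ℝ] Lp ℝ 2 P)
    (hT : ∀ g : Lp ℝ 2 Q, ∀ᵐ x ∂P,
      (T g : EuclideanSpace ℝ (Fin d) → ℝ) x = (∫ y in S x, g y ∂Q) / (Q (S x)).toReal) :
    IsCompactOperator T :=
  averaging_operator_compact_general d P Q S lam hlam hSlow T hT
end

section
/- Let P, Q be probability measures on ℝ^d, E ⊆ ℝ^d × ℝ^d measurable with sections S_x = {y : (x,y) ∈ E} and T_y = {x : (x,y) ∈ E}, and let η, ε > 0. Suppose f ∈ L²(P), g ∈ L²(Q) and α ∈ ℝ with |α| > 1, and η ≤ ε, satisfy the system f(x)((1-α) - (η/ε) Q(S_x)) = (η/ε) ∫_{S_x} g dQ for P-a.e. x and g(y)((1-α) - (η/ε) P(T_y)) = (η/ε) ∫_{T_y} f dP for Q-a.e. y. If moreover f and g are essentially bounded, then f = 0 P-a.e. and g = 0 Q-a.e. -/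
/-!
Write `r = η/ε ∈ (0, 1]`, `t = r Q(S_x) ∈ [0, 1]`. Since `|α| > 1`, the multiplier satisfies
`|(1 - α) - t| ≥ |α| - 1 + t`, while `|r ∫_{S_x} g dQ| ≤ t ‖g‖_∞`; for `t ≤ 1` this forces
`|f x| ≤ ‖g‖_∞ / |α|`. Symmetrically `‖g‖_∞ ≤ ‖f‖_∞ / |α|`, so `‖f‖_∞ ≤ ‖f‖_∞ / |α|²`
and both sup norms vanish.
-/

open MeasureTheory

lemma abs_le_div_of_abs_mul_sub_le {v α t N : ℝ} (hα : 1 < |α|) (ht0 : 0 ≤ t) (ht1 : t ≤ 1)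
    (hN : 0 ≤ N) (h : |v * ((1 - α) - t)| ≤ N * t) : |v| ≤ N / |α| := by
  have hmul : |α| - 1 + t ≤ |(1 - α) - t| := by
    rcases abs_cases α with ⟨_, _⟩ | ⟨_, _⟩ <;>
      rcases abs_cases ((1 - α) - t) with ⟨_, _⟩ | ⟨_, _⟩ <;> linarith
  have hv : |v| * (|α| - 1 + t) ≤ N * t :=
    (mul_le_mul_of_nonneg_left hmul (abs_nonneg v)).trans (abs_mul v _ ▸ h)
  rw [le_div_iff₀ (by linarith)]
  nlinarith [mul_nonneg (abs_nonneg v) ht0, mul_nonneg hN (sub_nonneg.2 ht1)]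

lemma lpNorm_top_le_of_ae_bound {α E : Type*} [MeasurableSpace α] [NormedAddCommGroup E]
    {μ : Measure α} {f : α → E} {C : ℝ} (hC : 0 ≤ C) (hfC : ∀ᵐ x ∂μ, ‖f x‖ ≤ C) :
    lpNorm f ⊤ μ ≤ C := by
  unfold lpNorm
  split_ifs
  · rw [eLpNorm_exponent_top]
    exact ENNReal.toReal_le_of_le_ofReal hC (eLpNormEssSup_le_of_ae_bound hfC)
  · exact hC

section Sections

variable {X Y : Type*} [MeasurableSpace X] [MeasurableSpace Y] {P : Measure X} {Q : Measure Y}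
  [IsProbabilityMeasure Q] {S : X → Set Y} {f : X → ℝ} {g : Y → ℝ} {r α N : ℝ}

lemma ae_norm_le_div_of_mul_sub_eq_setIntegral (hr0 : 0 ≤ r) (hr1 : r ≤ 1) (hα : 1 < |α|)
    (hN : 0 ≤ N) (hg : ∀ᵐ y ∂Q, ‖g y‖ ≤ N)
    (h : ∀ᵐ x ∂P, f x * ((1 - α) - r * (Q (S x)).toReal) = r * ∫ y in S x, g y ∂Q) :
    ∀ᵐ x ∂P, ‖f x‖ ≤ N / |α| := by
  filter_upwards [h] with x hx
  have hq1 : (Q (S x)).toReal ≤ 1 :=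
    ENNReal.toReal_le_of_le_ofReal zero_le_one (by simpa using prob_le_one)
  have hint : |∫ y in S x, g y ∂Q| ≤ N * (Q (S x)).toReal := by
    simpa [mul_comm, measureReal_def] using
      norm_setIntegral_le_of_norm_le_const_ae (measure_lt_top Q (S x)) (ae_restrict_of_ae hg)
  refine Real.norm_eq_abs _ ▸ abs_le_div_of_abs_mul_sub_le hα (by positivity)
    ((mul_le_of_le_one_right hr0 hq1).trans hr1) hN ?_
  rw [hx, abs_mul, abs_of_nonneg hr0, mul_left_comm]
  exact mul_le_mul_of_nonneg_left hint hr0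

end Sections

theorem eigen_system_trivial_of_abs_gt_one_general (d : ℕ)
    (P Q : Measure (EuclideanSpace ℝ (Fin d)))
    [IsProbabilityMeasure P] [IsProbabilityMeasure Q]
    (E : Set (EuclideanSpace ℝ (Fin d) × EuclideanSpace ℝ (Fin d)))
    (f g : EuclideanSpace ℝ (Fin d) → ℝ)
    (hfb : MemLp f ⊤ P) (hgb : MemLp g ⊤ Q)
    (η ε α : ℝ) (hη : 0 < η) (hηε : η ≤ ε) (hε : 0 < ε) (hα : 1 < |α|)
    (h1 : ∀ᵐ x ∂P, f x * ((1 - α) - (η/ε) * (Q {y | (x, y) ∈ E}).toReal) =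
      (η/ε) * ∫ y in {y | (x, y) ∈ E}, g y ∂Q)
    (h2 : ∀ᵐ y ∂Q, g y * ((1 - α) - (η/ε) * (P {x | (x, y) ∈ E}).toReal) =
      (η/ε) * ∫ x in {x | (x, y) ∈ E}, f x ∂P) :
    (∀ᵐ x ∂P, f x = 0) ∧ (∀ᵐ y ∂Q, g y = 0) := by
  have hr0 : 0 ≤ η / ε := (div_pos hη hε).le
  have hr1 : η / ε ≤ 1 := (div_le_one hε).2 hηε
  set M := lpNorm f ⊤ P
  set N := lpNorm g ⊤ Q
  have hM0 : 0 ≤ M := lpNorm_nonneg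
  have hN0 : 0 ≤ N := lpNorm_nonneg
  have hMN : M ≤ N / |α| := lpNorm_top_le_of_ae_bound (div_nonneg hN0 (abs_nonneg α))
    (ae_norm_le_div_of_mul_sub_eq_setIntegral hr0 hr1 hα hN0 (ae_le_lpNorm_exponent_top hgb) h1)
  have hNM : N ≤ M / |α| := lpNorm_top_le_of_ae_bound (div_nonneg hM0 (abs_nonneg α))
    (ae_norm_le_div_of_mul_sub_eq_setIntegral hr0 hr1 hα hM0 (ae_le_lpNorm_exponent_top hfb) h2)
  rw [le_div_iff₀ (by linarith)] at hMN hNM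
  have hM : M = 0 := by nlinarith
  have hN : N = 0 := by nlinarith
  exact ⟨(lpNorm_eq_zero hfb ENNReal.top_ne_zero).1 hM,
    (lpNorm_eq_zero hgb ENNReal.top_ne_zero).1 hN⟩

theorem eigen_system_trivial_of_abs_gt_one (d : ℕ)
    (P Q : Measure (EuclideanSpace ℝ (Fin d)))
    [IsProbabilityMeasure P] [IsProbabilityMeasure Q]
    (E : Set (EuclideanSpace ℝ (Fin d) × EuclideanSpace ℝ (Fin d)))
    (hE : MeasurableSet E)
    (f g : EuclideanSpace ℝ (Fin d) → ℝ)
    (hf2 : MemLp f 2 P) (hg2 : MemLp g 2 Q)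
    (hfb : MemLp f ⊤ P) (hgb : MemLp g ⊤ Q)
    (η ε α : ℝ) (hη : 0 < η) (hηε : η ≤ ε) (hε : 0 < ε) (hα : 1 < |α|)
    (h1 : ∀ᵐ x ∂P, f x * ((1 - α) - (η/ε) * (Q {y | (x, y) ∈ E}).toReal) =
      (η/ε) * ∫ y in {y | (x, y) ∈ E}, g y ∂Q)
    (h2 : ∀ᵐ y ∂Q, g y * ((1 - α) - (η/ε) * (P {x | (x, y) ∈ E}).toReal) =
      (η/ε) * ∫ x in {x | (x, y) ∈ E}, f x ∂P) :
    (∀ᵐ x ∂P, f x = 0) ∧ (∀ᵐ y ∂Q, g y = 0) :=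
  eigen_system_trivial_of_abs_gt_one_general d P Q E f g hfb hgb η ε α hη hηε hε hα h1 h2
end

section
/- Let P, Q be probability measures on ℝ^d, E ⊆ ℝ^d × ℝ^d measurable with sections S_x and T_y, and η, ε > 0 with either η < ε, or η = ε and (P ⊗ Q)(E) < 1. Suppose f ∈ L²(P), g ∈ L²(Q) satisfy 2f(x) = (η/ε) ∫_{S_x} (f(x) + g(y)) dQ(y) for P-a.e. x and 2g(y) = (η/ε) ∫_{T_y} (f(x) + g(y)) dP(x) for Q-a.e. y. Then f(x) + g(y) = 0 for (P ⊗ Q)-a.e. (x,y). -/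
/-!
Write `h (x, y) = f x + g y` and `r = η / ε ≤ 1`. Squaring each equation and applying Jensen's
inequality to the indicator of the section gives `4 f(x)² ≤ r² ∫_{S_x} h² dQ` and
`4 g(y)² ≤ r² ∫_{T_y} h² dP`; with `h² ≤ 2 f² + 2 g²` this integrates to
`∫ h² ≤ r² ∫_E h² ≤ r² ∫ h²`. If `r < 1`, then `∫ h² = 0`. If `r = 1`, equality forces `h = 0`
a.e. off `E`; the equations then read `f = ∫ g` and `g = ∫ f` a.e., so `h` is an a.e. constant
vanishing on `Eᶜ`, which has positive measure.
-/

open MeasureTheory ProbabilityTheory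

section Jensen

variable {Ω : Type*} [MeasurableSpace Ω] {μ : Measure Ω} [IsProbabilityMeasure μ] {u : Ω → ℝ}

lemma sq_integral_le_integral_sq (hu : MemLp u 2 μ) : (∫ x, u x ∂μ) ^ 2 ≤ ∫ x, u x ^ 2 ∂μ := by
  have h := variance_nonneg u μ
  rw [variance_eq_sub hu] at h
  simpa using h

lemma sq_setIntegral_le_setIntegral_sq (hu : MemLp u 2 μ) {s : Set Ω} (hs : MeasurableSet s) :
    (∫ x in s, u x ∂μ) ^ 2 ≤ ∫ x in s, u x ^ 2 ∂μ := by
  have h := sq_integral_le_integral_sq (hu.indicator hs)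
  rw [integral_indicator hs] at h
  convert h using 1
  rw [← integral_indicator hs]
  congr 1 with x
  by_cases hx : x ∈ s <;> simp [hx]

lemma four_mul_sq_le_of_two_mul_eq_mul_setIntegral (hu : MemLp u 2 μ) {s : Set Ω}
    (hs : MeasurableSet s) {a r : ℝ} (h : 2 * a = r * ∫ x in s, u x ∂μ) :
    4 * a ^ 2 ≤ r ^ 2 * ∫ x in s, u x ^ 2 ∂μ :=
  calc 4 * a ^ 2 = r ^ 2 * (∫ x in s, u x ∂μ) ^ 2 := by rw [← mul_pow, ← h]; ring
    _ ≤ r ^ 2 * ∫ x in s, u x ^ 2 ∂μ := by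
      gcongr; exact sq_setIntegral_le_setIntegral_sq hu hs

end Jensen

lemma ae_notMem_imp_eq_zero_of_setIntegral_eq_integral {Ω : Type*} [MeasurableSpace Ω]
    {μ : Measure Ω} {u : Ω → ℝ} {s : Set Ω} (hs : MeasurableSet s) (hu : Integrable u μ)
    (hu₀ : 0 ≤ᵐ[μ] u) (h : ∫ x in s, u x ∂μ = ∫ x, u x ∂μ) :
    ∀ᵐ x ∂μ, x ∉ s → u x = 0 := by
  have hcompl : ∫ x in sᶜ, u x ∂μ = 0 := by linarith [integral_add_compl hs hu]
  rw [setIntegral_eq_zero_iff_of_nonneg_ae (ae_restrict_of_ae hu₀) hu.integrableOn] at hcompl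
  exact (ae_restrict_iff' hs.compl).1 hcompl

section ProdSections

variable {α β : Type*} [MeasurableSpace α] [MeasurableSpace β] {μ : Measure α} {ν : Measure β}
  {E : Set (α × β)} {u : α × β → ℝ}

lemma setIntegral_prodMk_left_eq_integral_indicator (hE : MeasurableSet E) (x : α) :
    ∫ y in {y | (x, y) ∈ E}, u (x, y) ∂ν = ∫ y, E.indicator u (x, y) ∂ν :=
  (integral_indicator (measurable_prodMk_left hE)).symm

lemma setIntegral_prodMk_right_eq_integral_indicator (hE : MeasurableSet E) (y : β) :
    ∫ x in {x | (x, y) ∈ E}, u (x, y) ∂μ = ∫ x, E.indicator u (x, y) ∂μ :=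
  (integral_indicator (measurable_prodMk_right hE)).symm

variable [SFinite ν]

lemma integrable_setIntegral_prodMk_left (hE : MeasurableSet E) (hu : Integrable u (μ.prod ν)) :
    Integrable (fun x ↦ ∫ y in {y | (x, y) ∈ E}, u (x, y) ∂ν) μ := by
  simpa only [setIntegral_prodMk_left_eq_integral_indicator hE] using
    (hu.indicator hE).integral_prod_left

variable [SFinite μ]

lemma integral_setIntegral_prodMk_left (hE : MeasurableSet E) (hu : Integrable u (μ.prod ν)) :
    ∫ x, ∫ y in {y | (x, y) ∈ E}, u (x, y) ∂ν ∂μ = ∫ p in E, u p ∂μ.prod ν := by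
  simp only [setIntegral_prodMk_left_eq_integral_indicator hE]
  rw [← integral_prod _ (hu.indicator hE), integral_indicator hE]

lemma integrable_setIntegral_prodMk_right (hE : MeasurableSet E) (hu : Integrable u (μ.prod ν)) :
    Integrable (fun y ↦ ∫ x in {x | (x, y) ∈ E}, u (x, y) ∂μ) ν := by
  simpa only [setIntegral_prodMk_right_eq_integral_indicator hE] using
    (hu.indicator hE).integral_prod_right

lemma integral_setIntegral_prodMk_right (hE : MeasurableSet E) (hu : Integrable u (μ.prod ν)) :
    ∫ y, ∫ x in {x | (x, y) ∈ E}, u (x, y) ∂μ ∂ν = ∫ p in E, u p ∂μ.prod ν := by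
  simp only [setIntegral_prodMk_right_eq_integral_indicator hE]
  rw [← integral_prod_symm _ (hu.indicator hE), integral_indicator hE]

end ProdSections

section EigenSystem

variable {α β : Type*} [MeasurableSpace α] [MeasurableSpace β] {μ : Measure α} {ν : Measure β}
  [IsProbabilityMeasure μ] [IsProbabilityMeasure ν] {E : Set (α × β)} {f : α → ℝ} {g : β → ℝ}
  {r : ℝ}

lemma four_mul_integral_sq_le_of_eq_left (hE : MeasurableSet E) (hf : MemLp f 2 μ)
    (hg : MemLp g 2 ν)
    (h : ∀ᵐ x ∂μ, 2 * f x = r * ∫ y in {y | (x, y) ∈ E}, (f x + g y) ∂ν) :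
    4 * ∫ x, f x ^ 2 ∂μ ≤ r ^ 2 * ∫ p in E, (f p.1 + g p.2) ^ 2 ∂μ.prod ν := by
  have hH : Integrable (fun p : α × β ↦ (f p.1 + g p.2) ^ 2) (μ.prod ν) :=
    ((hf.comp_fst ν).add (hg.comp_snd μ)).integrable_sq
  calc 4 * ∫ x, f x ^ 2 ∂μ = ∫ x, 4 * f x ^ 2 ∂μ := (integral_const_mul _ _).symm
    _ ≤ ∫ x, r ^ 2 * ∫ y in {y | (x, y) ∈ E}, (f x + g y) ^ 2 ∂ν ∂μ := by
      refine integral_mono_ae (hf.integrable_sq.const_mul 4)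
        ((integrable_setIntegral_prodMk_left hE hH).const_mul _) ?_
      filter_upwards [h] with x hx
      exact four_mul_sq_le_of_two_mul_eq_mul_setIntegral ((memLp_const (f x)).add hg)
        (measurable_prodMk_left hE) hx
    _ = r ^ 2 * ∫ p in E, (f p.1 + g p.2) ^ 2 ∂μ.prod ν := by
      rw [integral_const_mul, integral_setIntegral_prodMk_left hE hH]

lemma four_mul_integral_sq_le_of_eq_right (hE : MeasurableSet E) (hf : MemLp f 2 μ)
    (hg : MemLp g 2 ν)
    (h : ∀ᵐ y ∂ν, 2 * g y = r * ∫ x in {x | (x, y) ∈ E}, (f x + g y) ∂μ) :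
    4 * ∫ y, g y ^ 2 ∂ν ≤ r ^ 2 * ∫ p in E, (f p.1 + g p.2) ^ 2 ∂μ.prod ν := by
  have hH : Integrable (fun p : α × β ↦ (f p.1 + g p.2) ^ 2) (μ.prod ν) :=
    ((hf.comp_fst ν).add (hg.comp_snd μ)).integrable_sq
  calc 4 * ∫ y, g y ^ 2 ∂ν = ∫ y, 4 * g y ^ 2 ∂ν := (integral_const_mul _ _).symm
    _ ≤ ∫ y, r ^ 2 * ∫ x in {x | (x, y) ∈ E}, (f x + g y) ^ 2 ∂μ ∂ν := by
      refine integral_mono_ae (hg.integrable_sq.const_mul 4)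
        ((integrable_setIntegral_prodMk_right hE hH).const_mul _) ?_
      filter_upwards [h] with y hy
      exact four_mul_sq_le_of_two_mul_eq_mul_setIntegral (hf.add (memLp_const (g y)))
        (measurable_prodMk_right hE) hy
    _ = r ^ 2 * ∫ p in E, (f p.1 + g p.2) ^ 2 ∂μ.prod ν := by
      rw [integral_const_mul, integral_setIntegral_prodMk_right hE hH]

lemma integral_add_sq_le_of_eq (hE : MeasurableSet E) (hf : MemLp f 2 μ) (hg : MemLp g 2 ν)
    (h₁ : ∀ᵐ x ∂μ, 2 * f x = r * ∫ y in {y | (x, y) ∈ E}, (f x + g y) ∂ν)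
    (h₂ : ∀ᵐ y ∂ν, 2 * g y = r * ∫ x in {x | (x, y) ∈ E}, (f x + g y) ∂μ) :
    ∫ p, (f p.1 + g p.2) ^ 2 ∂μ.prod ν ≤ r ^ 2 * ∫ p in E, (f p.1 + g p.2) ^ 2 ∂μ.prod ν := by
  have hf' := (hf.integrable_sq.comp_fst ν).const_mul 2
  have hg' := (hg.integrable_sq.comp_snd μ).const_mul 2
  calc ∫ p, (f p.1 + g p.2) ^ 2 ∂μ.prod ν
      ≤ ∫ p, (2 * f p.1 ^ 2 + 2 * g p.2 ^ 2) ∂μ.prod ν := by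
        refine integral_mono ((hf.comp_fst ν).add (hg.comp_snd μ)).integrable_sq (hf'.add hg')
          fun p ↦ ?_
        nlinarith [sq_nonneg (f p.1 - g p.2)]
    _ = 2 * ∫ x, f x ^ 2 ∂μ + 2 * ∫ y, g y ^ 2 ∂ν := by
        rw [integral_add hf' hg', integral_const_mul, integral_const_mul,
          integral_fun_fst (fun x ↦ f x ^ 2), integral_fun_snd (fun y ↦ g y ^ 2)]
        simp
    _ ≤ r ^ 2 * ∫ p in E, (f p.1 + g p.2) ^ 2 ∂μ.prod ν := by
        linarith [four_mul_integral_sq_le_of_eq_left hE hf hg h₁,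
          four_mul_integral_sq_le_of_eq_right hE hf hg h₂]

lemma ae_add_eq_zero_of_ae_notMem_imp (hE : MeasurableSet E) (hE₁ : μ.prod ν E < 1)
    (hf : Integrable f μ) (hg : Integrable g ν)
    (h₁ : ∀ᵐ x ∂μ, 2 * f x = ∫ y in {y | (x, y) ∈ E}, (f x + g y) ∂ν)
    (h₂ : ∀ᵐ y ∂ν, 2 * g y = ∫ x in {x | (x, y) ∈ E}, (f x + g y) ∂μ)
    (hoff : ∀ᵐ p ∂μ.prod ν, p ∉ E → f p.1 + g p.2 = 0) :
    ∀ᵐ p ∂μ.prod ν, f p.1 + g p.2 = 0 := by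
  have hf_const : ∀ᵐ x ∂μ, f x = ∫ y, g y ∂ν := by
    filter_upwards [h₁, Measure.ae_ae_of_ae_prod hoff] with x hx hxoff
    rw [setIntegral_eq_integral_of_ae_compl_eq_zero (s := {y | (x, y) ∈ E}) hxoff,
      integral_add (integrable_const _) hg, integral_const, probReal_univ, one_smul] at hx
    linarith
  have hg_const : ∀ᵐ y ∂ν, g y = ∫ x, f x ∂μ := by
    filter_upwards [h₂, Measure.ae_ae_of_ae_prod
      (Measure.measurePreserving_swap.quasiMeasurePreserving.ae hoff)] with y hy hyoff
    rw [setIntegral_eq_integral_of_ae_compl_eq_zero (s := {x | (x, y) ∈ E})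
      (f := fun x ↦ f x + g y) hyoff, integral_add hf (integrable_const _),
      integral_const, probReal_univ, one_smul] at hy
    linarith
  set c := ∫ y, g y ∂ν + ∫ x, f x ∂μ
  have hconst : ∀ᵐ p ∂μ.prod ν, f p.1 + g p.2 = c := by
    filter_upwards [Measure.quasiMeasurePreserving_fst.ae hf_const,
      Measure.quasiMeasurePreserving_snd.ae hg_const] with p hp₁ hp₂
    rw [hp₁, hp₂]
  rcases eq_or_ne c 0 with hc | hc
  · filter_upwards [hconst] with p hp using hp.trans hc
  · have hmem : ∀ᵐ p ∂μ.prod ν, p ∈ E := by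
      filter_upwards [hoff, hconst] with p hp hpc
      by_contra hpE
      exact hc (hpc ▸ hp hpE)
    rw [ae_mem_iff_measure_eq hE.nullMeasurableSet, measure_univ] at hmem
    exact absurd hmem hE₁.ne

end EigenSystem

theorem eigen_system_trivial_neg_one_general (d : ℕ)
    (P Q : Measure (EuclideanSpace ℝ (Fin d)))
    [IsProbabilityMeasure P] [IsProbabilityMeasure Q]
    (E : Set (EuclideanSpace ℝ (Fin d) × EuclideanSpace ℝ (Fin d)))
    (hE : MeasurableSet E)
    (f g : EuclideanSpace ℝ (Fin d) → ℝ)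
    (hf2 : MemLp f 2 P) (hg2 : MemLp g 2 Q)
    (η ε : ℝ) (hη : 0 < η) (hε : 0 < ε)
    (hcase : η < ε ∨ (η = ε ∧ (P.prod Q) E < 1))
    (h1 : ∀ᵐ x ∂P, 2 * f x = (η/ε) * ∫ y in {y | (x, y) ∈ E}, (f x + g y) ∂Q)
    (h2 : ∀ᵐ y ∂Q, 2 * g y = (η/ε) * ∫ x in {x | (x, y) ∈ E}, (f x + g y) ∂P) :
    ∀ᵐ p ∂(P.prod Q), f p.1 + g p.2 = 0 := by
  have hsq : Integrable (fun p ↦ (f p.1 + g p.2) ^ 2) (P.prod Q) :=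
    ((hf2.comp_fst Q).add (hg2.comp_snd P)).integrable_sq
  have hsq₀ : 0 ≤ᵐ[P.prod Q] fun p ↦ (f p.1 + g p.2) ^ 2 := ae_of_all _ fun _ ↦ sq_nonneg _
  have hle := integral_add_sq_le_of_eq hE hf2 hg2 h1 h2
  have hE_le := setIntegral_le_integral (s := E) hsq hsq₀
  rcases hcase with hlt | ⟨rfl, hE₁⟩
  · have hr : (η / ε) ^ 2 < 1 := by
      have := (div_lt_one hε).2 hlt
      have := div_pos hη hε
      nlinarith
    have hzero : ∫ p, (f p.1 + g p.2) ^ 2 ∂P.prod Q = 0 := by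
      nlinarith [integral_nonneg_of_ae hsq₀]
    filter_upwards [(integral_eq_zero_iff_of_nonneg_ae hsq₀ hsq).1 hzero] with p hp
    exact pow_eq_zero_iff two_ne_zero |>.1 hp
  · rw [div_self hε.ne', one_pow, one_mul] at hle
    simp only [div_self hε.ne', one_mul] at h1 h2
    refine ae_add_eq_zero_of_ae_notMem_imp hE hE₁ (hf2.integrable one_le_two)
      (hg2.integrable one_le_two) h1 h2 ?_
    filter_upwards [ae_notMem_imp_eq_zero_of_setIntegral_eq_integral hE hsq hsq₀
      (le_antisymm hE_le hle)] with p hp hpE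
    exact pow_eq_zero_iff two_ne_zero |>.1 (hp hpE)

theorem eigen_system_trivial_neg_one (d : ℕ)
    (P Q : Measure (EuclideanSpace ℝ (Fin d)))
    [IsProbabilityMeasure P] [IsProbabilityMeasure Q]
    (E : Set (EuclideanSpace ℝ (Fin d) × EuclideanSpace ℝ (Fin d)))
    (hE : MeasurableSet E)
    (f g : EuclideanSpace ℝ (Fin d) → ℝ)
    (hf2 : MemLp f 2 P) (hg2 : MemLp g 2 Q)
    (hmf : Measurable f) (hmg : Measurable g)
    (η ε : ℝ) (hη : 0 < η) (hε : 0 < ε)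
    (hcase : η < ε ∨ (η = ε ∧ (P.prod Q) E < 1))
    (h1 : ∀ᵐ x ∂P, 2 * f x = (η/ε) * ∫ y in {y | (x, y) ∈ E}, (f x + g y) ∂Q)
    (h2 : ∀ᵐ y ∂Q, 2 * g y = (η/ε) * ∫ x in {x | (x, y) ∈ E}, (f x + g y) ∂P) :
    ∀ᵐ p ∂(P.prod Q), f p.1 + g p.2 = 0 :=
  eigen_system_trivial_neg_one_general d P Q E hE f g hf2 hg2 η ε hη hε hcase h1 h2
end

section
/- Let P, Q be probability measures on ℝ^d and f, g : ℝ^d → ℝ bounded measurable. For all x, x' ∈ ℝ^d and η ∈ (0, ε], defining the gradient descent update f⁺(x) = f(x) + η(1 - (1/ε) ∫ (f(x) + g(y) - ½‖x-y‖²)₊ dQ(y)), one has f⁺(x) - f⁺(x') ≤ max(L, C) ‖x - x'‖ whenever f is L-Lipschitz, where C := sup{‖x - y‖ : x ∈ spt P ∪ {x, x'}, y ∈ spt Q} bounds the relevant distances; i.e., Lipschitz constants do not grow beyond max(L, C) under the gradient descent step. -/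
/-!
Write `λ = η/ε ∈ (0, 1]`. With `t = f x' + g y - ½‖x' - y‖²` and `s = f x + g y - ½‖x - y‖²`,
`t₊ - s₊ ≤ (t - s)₊ ≤ (C‖x - x'‖ - (f x - f x'))₊` for `Q`-a.e. `y`, so the integral terms of the
update differ by at most `m := (C‖x - x'‖ - (f x - f x'))₊`. Hence
`f⁺ x - f⁺ x' ≤ (f x - f x') + λ m`, which is either `f x - f x' ≤ L‖x - x'‖` or the convex
combination `(1 - λ)(f x - f x') + λ C‖x - x'‖` of two quantities bounded by `max L C ‖x - x'‖`.
-/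

open MeasureTheory

theorem half_sq_norm_sub_sub_half_sq_norm_sub_le {E : Type*} [SeminormedAddCommGroup E]
    {x x' y : E} {C : ℝ} (hx : ‖x - y‖ ≤ C) (hx' : ‖x' - y‖ ≤ C) :
    (1/2) * ‖x - y‖^2 - (1/2) * ‖x' - y‖^2 ≤ C * ‖x - x'‖ := by
  have hdist : |‖x - y‖ - ‖x' - y‖| ≤ ‖x - x'‖ := by
    simpa only [sub_sub_sub_cancel_right] using abs_norm_sub_norm_le (x - y) (x' - y)
  have hnorm_sub := (abs_le.mp hdist).2
  have hsum : ‖x - y‖ + ‖x' - y‖ ≤ 2 * C := by linarith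
  calc (1/2) * ‖x - y‖^2 - (1/2) * ‖x' - y‖^2
      = (1/2) * ((‖x - y‖ - ‖x' - y‖) * (‖x - y‖ + ‖x' - y‖)) := by ring
    _ ≤ (1/2) * (‖x - x'‖ * (2 * C)) := by
        gcongr (1/2) * ?_
        exact mul_le_mul hnorm_sub hsum (by positivity) (norm_nonneg _)
    _ = C * ‖x - x'‖ := by ring

theorem integral_le_integral_add_of_ae_le_add {α : Type*} [MeasurableSpace α] {μ : Measure α}
    [IsProbabilityMeasure μ] {u v : α → ℝ} {m : ℝ} (hu : Integrable u μ) (hv : Integrable v μ)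
    (h : ∀ᵐ y ∂μ, u y ≤ v y + m) : ∫ y, u y ∂μ ≤ ∫ y, v y ∂μ + m := by
  calc ∫ y, u y ∂μ ≤ ∫ y, (v y + m) ∂μ := integral_mono_ae hu (hv.add (integrable_const m)) h
    _ = ∫ y, v y ∂μ + m := by simp [integral_add hv (integrable_const m)]

noncomputable def positivePartIntegral {E : Type*} [SeminormedAddCommGroup E] [MeasurableSpace E]
    (Q : Measure E) (f g : E → ℝ) (z : E) : ℝ :=
  ∫ y, max (f z + g y - (1/2) * ‖z - y‖^2) 0 ∂Q

theorem positivePartIntegral_sub_le {E : Type*} [SeminormedAddCommGroup E] [MeasurableSpace E]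
    {Q : Measure E} [IsProbabilityMeasure Q] {Ω' : Set E} (hQsupp : Q Ω'ᶜ = 0) {f g : E → ℝ}
    {C : ℝ} {x x' : E} (hC : ∀ y ∈ Ω', ‖x - y‖ ≤ C ∧ ‖x' - y‖ ≤ C)
    (hInt : ∀ z, Integrable (fun y => max (f z + g y - (1/2) * ‖z - y‖^2) 0) Q) :
    positivePartIntegral Q f g x' - positivePartIntegral Q f g x
      ≤ max (C * ‖x - x'‖ - (f x - f x')) 0 := by
  have hpointwise : ∀ᵐ y ∂Q, max (f x' + g y - (1/2) * ‖x' - y‖^2) 0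
      ≤ max (f x + g y - (1/2) * ‖x - y‖^2) 0 + max (C * ‖x - x'‖ - (f x - f x')) 0 := by
    filter_upwards [measure_eq_zero_iff_ae_notMem.mp hQsupp] with y hy
    rw [Set.notMem_compl_iff] at hy
    have hquad := half_sq_norm_sub_sub_half_sq_norm_sub_le (hC y hy).1 (hC y hy).2
    have hpos := max_sub_max_le_max (f x' + g y - (1/2) * ‖x' - y‖^2) 0
      (f x + g y - (1/2) * ‖x - y‖^2) 0
    have hmono : max (f x' + g y - (1/2) * ‖x' - y‖^2 - (f x + g y - (1/2) * ‖x - y‖^2)) (0 - 0)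
        ≤ max (C * ‖x - x'‖ - (f x - f x')) 0 :=
      max_le_max (by linarith) (sub_self 0).le
    linarith
  unfold positivePartIntegral
  linarith [integral_le_integral_add_of_ae_le_add (hInt x') (hInt x) hpointwise]

theorem add_mul_le_max_mul_of_le_max_sub {a δ L C lam J : ℝ} (hδ : 0 ≤ δ) (ha : a ≤ L * δ)
    (hlam0 : 0 ≤ lam) (hlam1 : lam ≤ 1) (hJ : J ≤ max (C * δ - a) 0) :
    a + lam * J ≤ max L C * δ := by
  have hL : L * δ ≤ max L C * δ := by gcongr; exact le_max_left L C
  have hC : C * δ ≤ max L C * δ := by gcongr; exact le_max_right L C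
  have hlamJ : lam * J ≤ lam * max (C * δ - a) 0 := by gcongr
  rcases max_cases (C * δ - a) 0 with ⟨hm, -⟩ | ⟨hm, -⟩ <;> rw [hm] at hlamJ
  · nlinarith
  · linarith

theorem gradient_step_lipschitz_bound_general (d : ℕ)
    (Q : Measure (EuclideanSpace ℝ (Fin d))) [IsProbabilityMeasure Q]
    (Ω' : Set (EuclideanSpace ℝ (Fin d))) (hQsupp : Q Ω'ᶜ = 0)
    (f g : EuclideanSpace ℝ (Fin d) → ℝ)
    (ε η L C : ℝ) (hε : 0 < ε) (hη : η ∈ Set.Ioc (0:ℝ) ε)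
    (hLip : ∀ a b, |f a - f b| ≤ L * ‖a - b‖)
    (x x' : EuclideanSpace ℝ (Fin d))
    (hC : ∀ y ∈ Ω', ‖x - y‖ ≤ C ∧ ‖x' - y‖ ≤ C)
    (hInt : ∀ z, Integrable (fun y => max (f z + g y - (1/2) * ‖z - y‖^2) 0) Q)
    (fplus : EuclideanSpace ℝ (Fin d) → ℝ)
    (hfplus : ∀ z, fplus z =
      f z + η * (1 - (1/ε) * ∫ y, max (f z + g y - (1/2) * ‖z - y‖^2) 0 ∂Q)) :
    fplus x - fplus x' ≤ max L C * ‖x - x'‖ := by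
  have hstep : fplus x - fplus x' = (f x - f x') + η / ε *
      (positivePartIntegral Q f g x' - positivePartIntegral Q f g x) := by
    rw [hfplus, hfplus, positivePartIntegral, positivePartIntegral]
    ring
  rw [hstep]
  exact add_mul_le_max_mul_of_le_max_sub (norm_nonneg _) (le_of_abs_le (hLip x x'))
    (div_nonneg hη.1.le hε.le) ((div_le_one hε).mpr hη.2)
    (positivePartIntegral_sub_le hQsupp hC hInt)

theorem gradient_step_lipschitz_bound (d : ℕ)
    (Q : Measure (EuclideanSpace ℝ (Fin d))) [IsProbabilityMeasure Q]
    (Ω' : Set (EuclideanSpace ℝ (Fin d))) (hQsupp : Q Ω'ᶜ = 0)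
    (f g : EuclideanSpace ℝ (Fin d) → ℝ)
    (ε η L C : ℝ) (hε : 0 < ε) (hη : η ∈ Set.Ioc (0:ℝ) ε) (hL : 0 ≤ L)
    (hLip : ∀ a b, |f a - f b| ≤ L * ‖a - b‖)
    (x x' : EuclideanSpace ℝ (Fin d))
    (hC : ∀ y ∈ Ω', ‖x - y‖ ≤ C ∧ ‖x' - y‖ ≤ C)
    (hInt : ∀ z, Integrable (fun y => max (f z + g y - (1/2) * ‖z - y‖^2) 0) Q)
    (fplus : EuclideanSpace ℝ (Fin d) → ℝ)
    (hfplus : ∀ z, fplus z =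
      f z + η * (1 - (1/ε) * ∫ y, max (f z + g y - (1/2) * ‖z - y‖^2) 0 ∂Q)) :
    fplus x - fplus x' ≤ max L C * ‖x - x'‖ :=
  gradient_step_lipschitz_bound_general d Q Ω' hQsupp f g ε η L C hε hη hLip x x' hC hInt fplus
    hfplus
end
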